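/- arXiv:2411.00067 — 9 statements merged into one kernel-verified Lean document; each statement's English description precedes it below -/
import Mathlib

section
/- Let R be a commutative ring of characteristic 2, let n ≥ 1, let a, b : Fin n → R be arbitrary share vectors, and let r : (i j : Fin n) → R be an arbitrary family of values (only the entries with i < j are used). Define for each i the output share c_i := a_i·b_i + (∑_{j < i} (r j i + a_i·b_j + a_j·b_i)) + (∑_{j > i} r i j). Then ∑_{i} c_i = (∑_{i} a_i) · (∑_{i} b_i). (Correctness of the ISW masked multiplication gadget SecMult/SecAND: for every choice of the randomness r, the output shares form a sharing of the product of the two shared inputs.) -/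
theorem swap_lemma (R : Type*) [AddCommMonoid R] (n : ℕ)
    (f : Fin n → Fin n → R) :
    ∑ i : Fin n, ∑ j ∈ Finset.univ.filter (fun j => j < i), f j i
      = ∑ i : Fin n, ∑ j ∈ Finset.univ.filter (fun j => i < j), f i j :=
  Finset.sum_comm' (fun x y => by simp)

theorem tri_lemma (R : Type*) [AddCommMonoid R] (n : ℕ) (i : Fin n) (g : Fin n → R) :
    ∑ j : Fin n, g j = (∑ j ∈ Finset.univ.filter (fun j => j < i), g j) + g i
      + ∑ j ∈ Finset.univ.filter (fun j => i < j), g j := by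
  have h : (Finset.univ.filter (fun j => ¬ j < i)) =
      insert i (Finset.univ.filter (fun j : Fin n => i < j)) := by
    ext j
    simp [not_lt, le_iff_lt_or_eq, eq_comm, or_comm]
  rw [← Finset.sum_filter_add_sum_filter_not Finset.univ (fun j => j < i) g, h,
    Finset.sum_insert (by simp), add_assoc]

/-- **Correctness of the ISW masked multiplication gadget (`SecMult`/`SecAND`).**
In a commutative ring of characteristic 2, for arbitrary input share vectors
`a b : Fin n → R` and arbitrary randomness `r`, the output shares
`c i = a i * b i + (∑_{j<i} (r j i + a i * b j + a j * b i)) + (∑_{j>i} r i j)`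
form a sharing of `(∑ i, a i) * (∑ i, b i)`. -/
theorem stmt_0 (R : Type*) [CommRing R] [CharP R 2] (n : ℕ) (hn : 1 ≤ n)
    (a b : Fin n → R) (r : Fin n → Fin n → R) :
    ∑ i : Fin n,
      (a i * b i
        + (∑ j ∈ Finset.univ.filter (fun j => j < i), (r j i + a i * b j + a j * b i))
        + (∑ j ∈ Finset.univ.filter (fun j => i < j), r i j))
      = (∑ i, a i) * (∑ i, b i) := by
  have h2 : (2 : R) = 0 := by exact_mod_cast CharP.cast_eq_zero R 2
  simp only [Finset.sum_add_distrib]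
  rw [swap_lemma R n (fun j i => r j i), swap_lemma R n (fun j i => a j * b i)]
  rw [Finset.sum_mul_sum]
  have key : ∀ i : Fin n, ∑ j : Fin n, a i * b j =
      (∑ j ∈ Finset.univ.filter (fun j => j < i), a i * b j) + a i * b i
      + ∑ j ∈ Finset.univ.filter (fun j => i < j), a i * b j :=
    fun i => tri_lemma R n i (fun j => a i * b j)
  rw [Finset.sum_congr rfl (fun i _ => key i)]
  simp only [Finset.sum_add_distrib]
  have : ∀ x : R, x + x = 0 := fun x => by rw [← two_mul, h2, zero_mul]
  abel_nf
  simp only [two_smul, this, zero_add]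
end

section
/- Let w, n be natural numbers with n ≥ 1. Let x, y : Fin n → BitVec w be XOR-sharings of values X = ⨁_i x_i and Y = ⨁_i y_i, and let β : Fin n → Bool be a sharing of a bit b = xor of the β_i. Set m_i := (if β_i then BitVec.allOnes w else 0). Let r : (i j : Fin n) → BitVec w be arbitrary, and define the ISW-AND output shares a_i := (y_i &&& m_i) ^^^ (⨁_{j<i} (r j i ^^^ (y_i &&& m_j) ^^^ (y_j &&& m_i))) ^^^ (⨁_{j>i} r i j). Let d : Fin n → BitVec w be any vector with ⨁_i d_i = 0, and set s_i := x_i ^^^ a_i ^^^ d_i. Then ⨁_i s_i = if b then X ^^^ Y else X. (Functional correctness of the SecCondAdd gadget: for any randomness, its output is an XOR-sharing of X + b·Y.) -/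
/-- XOR-sum of a tuple of bit vectors. -/
def xorSum {w n : ℕ} (f : Fin n → BitVec w) : BitVec w :=
  (List.ofFn f).foldr (· ^^^ ·) 0

/-- XOR (parity) of a tuple of Booleans. -/
def xorFoldBool {n : ℕ} (f : Fin n → Bool) : Bool :=
  (List.ofFn f).foldr xor false

/-!
Bitwise, XOR and AND are addition and multiplication in the Boolean ring `Bool`, so every bit
of the output is a sum in a commutative ring of characteristic 2. There the ISW shares add up to
`(∑ i, y i) * (∑ i, m i)`: each `r i j` occurs in exactly two shares and cancels, while the
diagonal terms and the cross terms `y i * m j`, `y j * m i` (`j < i`) are all the products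
`y i * m j`. On every bit `∑ i, m i` is the shared bit `b` and `∑ i, d i = 0`, so the output bit
is `X + Y * b`.
-/

namespace Finset

variable {ι M : Type*} [Fintype ι] [LinearOrder ι] [AddCommMonoid M]

theorem sum_eq_add_sum_lt_add_sum_gt (g : ι → M) (i : ι) :
    ∑ j, g j = g i + ∑ j, (if j < i then g j else 0) + ∑ j, (if i < j then g j else 0) := by
  have hsplit (j : ι) :
      g j = (if j = i then g j else 0) + (if j < i then g j else 0)
        + (if i < j then g j else 0) := by
    rcases lt_trichotomy j i with h | rfl | h
    · simp [h, h.ne, h.not_gt]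
    · simp
    · simp [h, h.ne', h.not_gt]
  rw [sum_congr rfl fun j _ => hsplit j, sum_add_distrib, sum_add_distrib, sum_ite_eq']
  simp

end Finset

open Finset

theorem sum_isw_eq_mul {ι R : Type*} [Fintype ι] [LinearOrder ι] [CommSemiring R] [CharP R 2]
    (y m : ι → R) (r : ι → ι → R) :
    ∑ i, (y i * m i + ∑ j, (if j < i then r j i + y i * m j + y j * m i else 0)
        + ∑ j, (if i < j then r i j else 0)) = (∑ i, y i) * ∑ i, m i := by
  have hr : ∑ i, ∑ j, (if j < i then r j i else 0) = ∑ i, ∑ j, (if i < j then r i j else 0) :=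
    sum_comm
  have hym : ∑ i, ∑ j, (if j < i then y j * m i else 0)
      = ∑ i, ∑ j, (if i < j then y i * m j else 0) :=
    sum_comm
  calc _ = ∑ i, y i * m i + ∑ i, ∑ j, (if j < i then y i * m j else 0)
        + ∑ i, ∑ j, (if j < i then y j * m i else 0)
        + (∑ i, ∑ j, (if j < i then r j i else 0) + ∑ i, ∑ j, (if i < j then r i j else 0)) := by
        simp only [ite_add_zero, sum_add_distrib]; ring
    _ = ∑ i, (y i * m i + ∑ j, (if j < i then y i * m j else 0)
        + ∑ j, (if i < j then y i * m j else 0)) := by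
        rw [hr, CharTwo.add_self_eq_zero, hym, add_zero, sum_add_distrib, sum_add_distrib]
    _ = (∑ i, y i) * ∑ i, m i := by
        rw [sum_mul_sum]
        exact sum_congr rfl fun i _ => (sum_eq_add_sum_lt_add_sum_gt (y i * m ·) i).symm

instance : CharP Bool 2 := CharTwo.of_one_ne_zero_of_two_eq_zero (by decide) rfl

theorem xorFoldBool_eq_sum {n : ℕ} (f : Fin n → Bool) : xorFoldBool f = ∑ i, f i :=
  List.sum_ofFn

theorem getLsbD_xorSum {w n : ℕ} (f : Fin n → BitVec w) (k : ℕ) :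
    (xorSum f).getLsbD k = ∑ i, (f i).getLsbD k := by
  induction n with
  | zero => simp [xorSum, Bool.zero_eq_false]
  | succ n ih =>
    rw [Fin.sum_univ_succ, ← ih]
    simp [xorSum, List.ofFn_succ, Bool.add_eq_xor]

theorem BitVec.getLsbD_ite_zero {w : ℕ} (p : Prop) [Decidable p] (v : BitVec w) (k : ℕ) :
    (if p then v else 0).getLsbD k = if p then v.getLsbD k else 0 := by
  split <;> simp [Bool.zero_eq_false]

theorem stmt_2_general (w n : ℕ)
    (x y : Fin n → BitVec w) (β : Fin n → Bool)
    (r : Fin n → Fin n → BitVec w)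
    (m : Fin n → BitVec w) (hm : ∀ i, m i = if β i then BitVec.allOnes w else 0)
    (a : Fin n → BitVec w)
    (ha : ∀ i, a i = (y i &&& m i)
        ^^^ xorSum (fun j => if j < i then r j i ^^^ (y i &&& m j) ^^^ (y j &&& m i) else 0)
        ^^^ xorSum (fun j => if i < j then r i j else 0))
    (d : Fin n → BitVec w) (hd : xorSum d = 0)
    (s : Fin n → BitVec w) (hs : ∀ i, s i = x i ^^^ a i ^^^ d i) :
    xorSum s = if xorFoldBool β then xorSum x ^^^ xorSum y else xorSum x := by
  apply BitVec.eq_of_getLsbD_eq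
  intro k hk
  have hmk (i : Fin n) : (m i).getLsbD k = β i := by
    cases h : β i <;> simp [hm, h, hk]
  have hdk : ∑ i, (d i).getLsbD k = 0 := by
    rw [← getLsbD_xorSum, hd]; simp [Bool.zero_eq_false]
  have hak : ∑ i, (a i).getLsbD k = (xorSum y).getLsbD k * xorFoldBool β := by
    simp only [ha, BitVec.getLsbD_xor, BitVec.getLsbD_and, getLsbD_xorSum,
      BitVec.getLsbD_ite_zero, hmk, ← Bool.add_eq_xor, ← Bool.mul_eq_and, xorFoldBool_eq_sum]
    exact sum_isw_eq_mul _ _ _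
  calc (xorSum s).getLsbD k
      = (xorSum x).getLsbD k + ∑ i, (a i).getLsbD k + ∑ i, (d i).getLsbD k := by
        simp only [getLsbD_xorSum, hs, BitVec.getLsbD_xor, ← Bool.add_eq_xor,
          sum_add_distrib]
    _ = (if xorFoldBool β then xorSum x ^^^ xorSum y else xorSum x).getLsbD k := by
        rw [hak, hdk]
        cases xorFoldBool β <;> simp [Bool.add_eq_xor, Bool.mul_eq_and, Bool.zero_eq_false]

/-- **Functional correctness of the `SecCondAdd` gadget.**
Given XOR-sharings `x` of `X`, `y` of `Y` and a Boolean sharing `β` of a bit `b`,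
extend each share of `b` to `w` bits (`m i`), compute the ISW-AND output shares `a`
with arbitrary randomness `r`, XOR them into the shares of `x`, and refresh with any
`d` XOR-summing to zero.  The result is an XOR-sharing of `if b then X ^^^ Y else X`. -/
theorem stmt_2 (w n : ℕ) (hn : 1 ≤ n)
    (x y : Fin n → BitVec w) (β : Fin n → Bool)
    (r : Fin n → Fin n → BitVec w)
    (m : Fin n → BitVec w) (hm : ∀ i, m i = if β i then BitVec.allOnes w else 0)
    (a : Fin n → BitVec w)
    (ha : ∀ i, a i = (y i &&& m i)
        ^^^ xorSum (fun j => if j < i then r j i ^^^ (y i &&& m j) ^^^ (y j &&& m i) else 0)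
        ^^^ xorSum (fun j => if i < j then r i j else 0))
    (d : Fin n → BitVec w) (hd : xorSum d = 0)
    (s : Fin n → BitVec w) (hs : ∀ i, s i = x i ^^^ a i ^^^ d i) :
    xorSum s = if xorFoldBool β then xorSum x ^^^ xorSum y else xorSum x :=
  stmt_2_general w n x y β r m hm a ha d hd s hs
end

section
/- Let R be a commutative ring, n ≥ 1, let v : Fin n → R be initial shares, let p : Fin n → R be scalars, and for each j let u_j : Fin n → R satisfy ∑_i u_j(i) = 0. Define share vectors w^{(0)} := v and, for 1 ≤ j ≤ n, w^{(j)}_i := p_j · w^{(j-1)}_i + u_j(i). Then ∑_i w^{(n)}_i = (∏_{j} p_j) · (∑_i v_i). (Functional correctness of the SecScalarMult gadget: multiplying every additive share successively by each multiplicative share p_j, with an additive mask refresh after each multiplication, yields an additive sharing of (∏_j p_j)·(∑_i v_i).) -/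
/-- **Functional correctness of the `SecScalarMult` gadget.**
Starting from additive shares `v` and multiplying every share successively by each
multiplicative share `p j` (for `j = 0, …, n-1`), with an additive mask refresh
`u j` (summing to zero) after each multiplication, the final shares `w n` form an
additive sharing of `(∏ j, p j) * (∑ i, v i)`. -/
theorem stmt_3 (R : Type*) [CommRing R] (n : ℕ) (hn : 1 ≤ n)
    (v p : Fin n → R) (u : Fin n → Fin n → R)
    (hu : ∀ j, ∑ i, u j i = 0)
    (w : ℕ → Fin n → R)
    (hw0 : w 0 = v)
    (hw : ∀ j : Fin n, ∀ i : Fin n, w ((j : ℕ) + 1) i = p j * w (j : ℕ) i + u j i) :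
    ∑ i, w n i = (∏ j, p j) * (∑ i, v i) := by
  set q : ℕ → R := fun k => if h : k < n then p ⟨k, h⟩ else 1 with hq
  have key : ∀ m, m ≤ n → ∑ i, w m i = (∏ k ∈ Finset.range m, q k) * ∑ i, v i := by
    intro m
    induction m with
    | zero => intro _; simp [hw0]
    | succ m ih =>
      intro hm
      have hmn : m < n := hm
      have ihm := ih (le_of_lt hmn)
      have hstep : ∀ i, w (m + 1) i = p ⟨m, hmn⟩ * w m i + u ⟨m, hmn⟩ i := by
        intro i
        simpa using hw ⟨m, hmn⟩ i
      calc ∑ i, w (m + 1) i = ∑ i, (p ⟨m, hmn⟩ * w m i + u ⟨m, hmn⟩ i) := by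
            exact Finset.sum_congr rfl fun i _ => hstep i
        _ = p ⟨m, hmn⟩ * ∑ i, w m i + ∑ i, u ⟨m, hmn⟩ i := by
            rw [Finset.sum_add_distrib, Finset.mul_sum]
        _ = p ⟨m, hmn⟩ * ((∏ k ∈ Finset.range m, q k) * ∑ i, v i) := by
            rw [hu, ihm]; ring
        _ = (∏ k ∈ Finset.range (m + 1), q k) * ∑ i, v i := by
            rw [Finset.prod_range_succ, hq]
            simp [hmn]
            ring
  have hprod : ∏ k ∈ Finset.range n, q k = ∏ j, p j := by
    rw [← Fin.prod_univ_eq_prod_range]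
    exact Finset.prod_congr rfl fun j _ => by simp [hq, j.isLt]
  rw [key n le_rfl, hprod]
end

section
/- Let F be a field of characteristic 2, let n ≥ 1, and let (x_1, …, x_n) ∈ F^n be additive input shares of x = x_1 + ⋯ + x_n. Run the B2M conversion: initialize m_1 := x_1; for j = 2, …, n choose any nonzero m_j ∈ F^×, set m_1 := m_1 · m_j, then for k = 2, …, n−j+1 choose any r_{j,k} ∈ F and update x_k := m_j·x_k + r_{j,k}, m_1 := m_1 + x_k, x_k := r_{j,k}; afterwards set x_{n−j+2} := m_j · x_{n−j+2}, m_1 := m_1 + x_{n−j+2}, and finally replace m_j by its multiplicative inverse m_j^{-1}. Then, for every choice of the nonzero values m_2, …, m_n and of the randomness r_{j,k}, the algorithm's output (m_1, m_2, …, m_n) satisfies m_1 · m_2 ⋯ m_n = x. (Functional correctness of the Boolean-to-multiplicative mask conversion: the product of the output shares equals the sum of the input shares.) -/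
/-- Inner loop of the B2M conversion for a fixed outer index `j`, with multiplicative
share `mj` and randomness `r`.  The state is the pair `(m₁, x)` consisting of the
accumulator share and the remaining additive shares.  For each `k` in `ks` it performs
`x k := mj * x k + r k;  m₁ := m₁ + x k;  x k := r k`. -/
def B2Minner {F : Type*} [Field F] (mj : F) (r : ℕ → F)
    (st : F × (ℕ → F)) (ks : List ℕ) : F × (ℕ → F) :=
  ks.foldl (fun st k =>
    (st.1 + (mj * st.2 k + r k), Function.update st.2 k (r k))) st

/-- One outer iteration (index `j`) of the B2M conversion:
`m₁ := m₁ * m j`; then the inner loop over `k = 2, …, n − j + 1`; then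
`x_{n−j+2} := m j * x_{n−j+2};  m₁ := m₁ + x_{n−j+2}`. -/
def B2Mstep {F : Type*} [Field F] (n : ℕ) (m : ℕ → F) (r : ℕ → ℕ → F)
    (st : F × (ℕ → F)) (j : ℕ) : F × (ℕ → F) :=
  let st1 : F × (ℕ → F) := (st.1 * m j, st.2)
  let st2 := B2Minner (m j) (r j) st1 (List.range' 2 (n - j))
  (st2.1 + m j * st2.2 (n - j + 2), st2.2)

/-- The Genelle–Prouff–Quisquater Boolean-to-multiplicative conversion (Algorithm B2M):
initialize `m₁ := x 1` and run the outer loop for `j = 2, …, n`.  It returns the final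
value of `m₁` (together with the final additive-share state); the remaining output
shares are the inverses `(m j)⁻¹` for `j = 2, …, n`. -/
def B2M {F : Type*} [Field F] (n : ℕ) (x : ℕ → F) (m : ℕ → F) (r : ℕ → ℕ → F) :
    F × (ℕ → F) :=
  (List.range' 2 (n - 1)).foldl (B2Mstep n m r) (x 1, x)

/-! In outer iteration `j` the quantity `m₁ + x₂ + ⋯ + x_{n−j+2}` is multiplied by `m j`: the
inner loop adds `m j * x k + r j k` to `m₁` and leaves `r j k` in `x k`, and in characteristic 2
the two copies of `r j k` cancel. This quantity starts as `x₁ + ⋯ + xₙ` and ends as `m₁`, so the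
final `m₁` is `m 2 ⋯ m n * (x₁ + ⋯ + xₙ)`. -/

open Finset

section Inner

variable {F : Type*} [Field F] (mj : F) (r : ℕ → F)

theorem B2Minner_cons (st : F × (ℕ → F)) (k : ℕ) (ks : List ℕ) :
    B2Minner mj r st (k :: ks) =
      B2Minner mj r (st.1 + (mj * st.2 k + r k), Function.update st.2 k (r k)) ks :=
  rfl

theorem B2Minner_snd (st : F × (ℕ → F)) (ks : List ℕ) :
    (B2Minner mj r st ks).2 = fun k => if k ∈ ks then r k else st.2 k := by
  induction ks generalizing st with
  | nil => rfl
  | cons a ks ih =>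
    rw [B2Minner_cons, ih]
    funext k
    by_cases hk : k ∈ ks <;> by_cases hka : k = a <;> simp_all

theorem B2Minner_fst (st : F × (ℕ → F)) {ks : List ℕ} (hks : ks.Nodup) :
    (B2Minner mj r st ks).1 = st.1 + (ks.map fun k => mj * st.2 k + r k).sum := by
  induction ks generalizing st with
  | nil => simp [B2Minner]
  | cons a ks ih =>
    rw [List.nodup_cons] at hks
    have hupdate : ks.map (fun k => mj * Function.update st.2 a (r a) k + r k) =
        ks.map fun k => mj * st.2 k + r k :=
      List.map_congr_left fun k hk => by
        rw [Function.update_of_ne (ne_of_mem_of_not_mem hk hks.1)]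
    rw [B2Minner_cons, ih _ hks.2, hupdate, List.map_cons, List.sum_cons, add_assoc]

end Inner

/-- `m₁ + x₂ + ⋯ + x_{n−j+2}` for the state `(m₁, x)` at the start of outer iteration `j`. -/
def maskedSum {F : Type*} [Field F] (n j : ℕ) (st : F × (ℕ → F)) : F :=
  st.1 + ((List.range' 2 (n + 1 - j)).map st.2).sum

section Outer

variable {F : Type*} [Field F] [CharP F 2] (n : ℕ) (m : ℕ → F) (r : ℕ → ℕ → F)

theorem maskedSum_B2Mstep (st : F × (ℕ → F)) {j : ℕ} (hj : j ≤ n) :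
    maskedSum n (j + 1) (B2Mstep n m r st j) = m j * maskedSum n j st := by
  have hlast : n - j + 2 ∉ List.range' 2 (n - j) := by rw [List.mem_range'_1]; omega
  have hks : List.range' 2 (n + 1 - j) = List.range' 2 (n - j) ++ [n - j + 2] := by
    rw [show n + 1 - j = n - j + 1 by omega, List.range'_concat, one_mul, Nat.add_comm 2]
  simp only [maskedSum, B2Mstep, B2Minner_fst _ _ _ List.nodup_range', B2Minner_snd,
    if_neg hlast, show n + 1 - (j + 1) = n - j by omega, hks]
  rw [List.map_congr_left fun k hk => if_pos hk]
  simp only [List.map_append, List.sum_append, List.sum_map_add, List.sum_map_mul_left,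
    List.map_cons, List.map_nil, List.sum_cons, List.sum_nil]
  linear_combination CharTwo.add_self_eq_zero ((List.range' 2 (n - j)).map (r j)).sum

theorem maskedSum_foldl_B2Mstep (st : F × (ℕ → F)) {s t : ℕ} (h : s + t ≤ n + 1) :
    maskedSum n (s + t) ((List.range' s t).foldl (B2Mstep n m r) st) =
      ((List.range' s t).map m).prod * maskedSum n s st := by
  induction t generalizing s st with
  | zero => simp
  | succ t ih =>
    rw [List.range'_succ, List.foldl_cons, show s + (t + 1) = s + 1 + t by omega,
      ih _ (by omega), maskedSum_B2Mstep n m r st (by omega), List.map_cons, List.prod_cons,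
      mul_left_comm, mul_assoc]

theorem B2M_fst_eq (x : ℕ → F) (hn : 1 ≤ n) :
    (B2M n x m r).1 = (∏ j ∈ Icc 2 n, m j) * ∑ i ∈ Icc 1 n, x i := by
  have hfold := maskedSum_foldl_B2Mstep n m r (x 1, x) (s := 2) (t := n - 1) (by omega)
  simp only [show 2 + (n - 1) = n + 1 by omega, maskedSum, Nat.sub_self, List.range'_zero,
    List.map_nil, List.sum_nil, add_zero, show n + 1 - 2 = n - 1 by omega] at hfold
  have hrange : List.range' 1 n = 1 :: List.range' 2 (n - 1) := by
    conv_lhs => rw [← Nat.sub_add_cancel hn, List.range'_succ]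
  rw [B2M, hfold, Nat.Icc_eq_range', Nat.Icc_eq_range', Finset.prod_eq_multiset_prod,
    Finset.sum_eq_multiset_sum, show n + 1 - 2 = n - 1 by omega, Nat.add_sub_cancel]
  simp only [Multiset.map_coe, Multiset.prod_coe, Multiset.sum_coe, hrange, List.map_cons,
    List.sum_cons]

end Outer

/-- **Functional correctness of the B2M Boolean-to-multiplicative mask conversion.**
Over a field of characteristic 2, for every choice of the nonzero values
`m 2, …, m n` and of the randomness `r`, the output shares
`((B2M n x m r).1, (m 2)⁻¹, …, (m n)⁻¹)` satisfy: their product equals the sum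
`x 1 + ⋯ + x n` of the input shares. -/
theorem stmt_4 (F : Type*) [Field F] [CharP F 2] (n : ℕ) (hn : 1 ≤ n)
    (x m : ℕ → F) (r : ℕ → ℕ → F)
    (hm : ∀ j, 2 ≤ j → j ≤ n → m j ≠ 0) :
    (B2M n x m r).1 * ∏ j ∈ Finset.Icc 2 n, (m j)⁻¹
      = ∑ i ∈ Finset.Icc 1 n, x i := by
  have hprod : ∏ j ∈ Icc 2 n, m j ≠ 0 :=
    prod_ne_zero_iff.2 fun j hj => hm j (mem_Icc.1 hj).1 (mem_Icc.1 hj).2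
  rw [B2M_fst_eq n m r x hn, mul_right_comm, prod_inv_distrib, mul_inv_cancel₀ hprod, one_mul]
end

section
/- Let F be a field of characteristic 2, n ≥ 1, and let (x_1, …, x_n) be additive shares with x := x_1 + ⋯ + x_n ≠ 0. Let (m_1, …, m_n) be the output of the B2M conversion on (x_1, …, x_n) for any choice of nonzero values m_2, …, m_n ∈ F^× and any randomness. Then every output share m_i is nonzero, and the share-wise inverses p_i := m_i^{-1} satisfy p_1 · p_2 ⋯ p_n = x^{-1}. (Functional correctness of the B2Minv gadget: for a nonzero shared input, it outputs a multiplicative sharing of the inverse of the shared value.) -/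
/-! After the outer steps `j = 2, …, t + 1`, the running value `m₁` plus the additive shares
`x₂, …, x_{n-t}` still in play equals `m₂ ⋯ m_{t+1} · x`: step `j` multiplies `m₁` by `m j` and
absorbs `m j` times the shares, while each fresh mask is added to `m₁` and becomes a share, so
it contributes twice and vanishes in characteristic 2. At `t = n - 1` no shares remain, so
`m₁ = m₂ ⋯ mₙ · x`, and the product of the inverted output shares is `x⁻¹`. -/

open Finset

section B2M

variable {F : Type*} [Field F]

lemma B2Minner_range' (mj : F) (r : ℕ → F) (a : F) (f : ℕ → F) (s L : ℕ) :
    B2Minner mj r (a, f) (List.range' s L)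
      = (a + ∑ k ∈ Ico s (s + L), (mj * f k + r k),
         fun k => if k ∈ Ico s (s + L) then r k else f k) := by
  induction L with
  | zero => simp [B2Minner]
  | succ L ih =>
    have hnew : s + L ∉ Ico s (s + L) := by simp
    unfold B2Minner at ih ⊢
    rw [List.range'_1_concat, List.foldl_concat, ih]
    dsimp only
    rw [if_neg hnew, ← Nat.add_assoc s L 1, sum_Ico_succ_top (Nat.le_add_right s L)]
    refine Prod.ext (add_assoc _ _ _) (funext fun k => ?_)
    by_cases hk : k = s + L
    · simp [hk]
    · simp only [Function.update_of_ne hk, mem_Ico, Nat.lt_add_one_iff_lt_or_eq, hk, or_false]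

lemma B2Mstep_eq (n : ℕ) (m : ℕ → F) (r : ℕ → ℕ → F) (st : F × (ℕ → F)) (j : ℕ) :
    B2Mstep n m r st j
      = (st.1 * m j + ∑ k ∈ Icc 2 (n - j + 1), (m j * st.2 k + r j k)
           + m j * st.2 (n - j + 2),
         fun k => if k ∈ Icc 2 (n - j + 1) then r j k else st.2 k) := by
  have hIco : Ico 2 (2 + (n - j)) = Icc 2 (n - j + 1) := by
    ext k; simp only [mem_Ico, mem_Icc]; omega
  have hlast : n - j + 2 ∉ Icc 2 (n - j + 1) := by simp
  simp only [B2Mstep, B2Minner_range', hIco, if_neg hlast]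

lemma B2Mstep_fst_add_sum [CharP F 2] (n : ℕ) (m : ℕ → F) (r : ℕ → ℕ → F)
    (st : F × (ℕ → F)) (j : ℕ) :
    (B2Mstep n m r st j).1 + ∑ k ∈ Icc 2 (n - j + 1), (B2Mstep n m r st j).2 k
      = m j * (st.1 + ∑ k ∈ Icc 2 (n - j + 2), st.2 k) := by
  have hfresh : ∑ k ∈ Icc 2 (n - j + 1),
      (if k ∈ Icc 2 (n - j + 1) then r j k else st.2 k) = ∑ k ∈ Icc 2 (n - j + 1), r j k :=
    sum_congr rfl fun k hk => if_pos hk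
  have hcancel := CharTwo.add_self_eq_zero (∑ k ∈ Icc 2 (n - j + 1), r j k)
  rw [B2Mstep_eq, hfresh, sum_Icc_succ_top (a := 2) (b := n - j + 1) (by omega),
    sum_add_distrib, ← mul_sum]
  linear_combination hcancel

lemma foldl_B2Mstep_fst_add_sum [CharP F 2] {n : ℕ} (hn : 1 ≤ n) (x m : ℕ → F)
    (r : ℕ → ℕ → F) {t : ℕ} (ht : t + 1 ≤ n) :
    ((List.range' 2 t).foldl (B2Mstep n m r) (x 1, x)).1
      + ∑ k ∈ Icc 2 (n - t), ((List.range' 2 t).foldl (B2Mstep n m r) (x 1, x)).2 k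
      = (∏ j ∈ Icc 2 (t + 1), m j) * ∑ i ∈ Icc 1 n, x i := by
  induction t with
  | zero =>
    rw [← insert_Icc_add_one_left_eq_Icc hn, sum_insert (by simp)]
    simp
  | succ t ih =>
    have hnext := B2Mstep_fst_add_sum n m r
      ((List.range' 2 t).foldl (B2Mstep n m r) (x 1, x)) (t + 2)
    rw [show n - (t + 2) + 1 = n - (t + 1) by omega, show n - (t + 2) + 2 = n - t by omega,
      ih (by omega)] at hnext
    rw [List.range'_1_concat, List.foldl_concat, add_comm 2 t, hnext,
      prod_Icc_succ_top (b := t + 1) (by omega)]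
    ring

lemma B2M_fst [CharP F 2] {n : ℕ} (hn : 1 ≤ n) (x m : ℕ → F) (r : ℕ → ℕ → F) :
    (B2M n x m r).1 = (∏ j ∈ Icc 2 n, m j) * ∑ i ∈ Icc 1 n, x i := by
  have h := foldl_B2Mstep_fst_add_sum hn x m r (t := n - 1) (by omega)
  rwa [show n - (n - 1) = 1 by omega, Icc_eq_empty (by omega), sum_empty, add_zero,
    Nat.sub_add_cancel hn] at h

end B2M

/-- **Functional correctness of the `B2Minv` gadget.**
Over a field of characteristic 2, if the additive shares `x 1, …, x n` sum to a
nonzero value, then every output share of the B2M conversion (namely the final `m₁`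
and the inverses `(m j)⁻¹` for `j = 2, …, n`) is nonzero, and the share-wise inverses
of these output shares form a multiplicative sharing of `(x 1 + ⋯ + x n)⁻¹`. -/
theorem stmt_5 (F : Type*) [Field F] [CharP F 2] (n : ℕ) (hn : 1 ≤ n)
    (x m : ℕ → F) (r : ℕ → ℕ → F)
    (hm : ∀ j, 2 ≤ j → j ≤ n → m j ≠ 0)
    (hx : ∑ i ∈ Finset.Icc 1 n, x i ≠ 0) :
    ((B2M n x m r).1 ≠ 0 ∧ ∀ j ∈ Finset.Icc 2 n, (m j)⁻¹ ≠ 0)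
    ∧ ((B2M n x m r).1)⁻¹ * ∏ j ∈ Finset.Icc 2 n, ((m j)⁻¹)⁻¹
        = (∑ i ∈ Finset.Icc 1 n, x i)⁻¹ := by
  have hmj : ∀ j ∈ Icc 2 n, m j ≠ 0 := fun j hj => hm j (mem_Icc.1 hj).1 (mem_Icc.1 hj).2
  have hprod : ∏ j ∈ Icc 2 n, m j ≠ 0 := prod_ne_zero_iff.2 hmj
  simp only [B2M_fst hn, inv_inv]
  refine ⟨⟨mul_ne_zero hprod hx, fun j hj => inv_ne_zero (hmj j hj)⟩, ?_⟩
  field_simp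
end

section
/- Let G be a finite (additive) abelian group, n ≥ 1, and fix x = (x_1, …, x_n) ∈ G^n. Let r_2, …, r_n be independent, uniformly distributed random elements of G, and define the output shares y_1 := x_1 + (r_2 + ⋯ + r_n) and y_i := x_i − r_i for 2 ≤ i ≤ n. Then the random vector (y_1, …, y_n) is uniformly distributed on the coset {y ∈ G^n : y_1 + ⋯ + y_n = x_1 + ⋯ + x_n}. (Output distribution of the Refresh gadget: it preserves the shared value and its output sharing is uniform among all sharings of that value.) -/
/-! The refresh map `r ↦ y` is injective (the last `n - 1` output shares determine `r`) and its
image is exactly the coset of sharings of `∑ xᵢ`; the pushforward of a uniform distribution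
under an injection is uniform on the image. -/

open Finset

namespace PMF

variable {α β : Type*} [Fintype α] [Nonempty α]

theorem map_uniformOfFintype_of_injective {f : α → β} (hf : f.Injective) {s : Finset β}
    (hs : s.Nonempty) (hfs : ∀ b, b ∈ s ↔ ∃ a, f a = b) :
    (uniformOfFintype α).map f = uniformOfFinset s hs := by
  have hcard : #s = Fintype.card α := by
    classical
    rw [show s = univ.image f by ext; simp [hfs], card_image_of_injective _ hf, card_univ]
  ext b
  rw [map_apply, uniformOfFinset_apply]
  split_ifs with hb
  · obtain ⟨a, rfl⟩ := (hfs b).1 hb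
    rw [tsum_eq_single a fun a' ha' => if_neg fun h => ha' (hf h.symm), if_pos rfl,
      uniformOfFintype_apply, hcard]
  · exact ENNReal.tsum_eq_zero.2 fun a => if_neg fun h => hb ((hfs b).2 ⟨a, h.symm⟩)

end PMF

section Refresh

variable {G : Type*} [AddCommGroup G] {m : ℕ}

def refresh (x : Fin (m + 1) → G) (r : Fin m → G) : Fin (m + 1) → G :=
  Fin.cons (x 0 + ∑ j, r j) fun j => x j.succ - r j

theorem sum_refresh (x : Fin (m + 1) → G) (r : Fin m → G) :
    ∑ i, refresh x r i = ∑ i, x i := by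
  simp only [refresh, Fin.sum_univ_succ, Fin.cons_zero, Fin.cons_succ, sum_sub_distrib]
  abel

theorem refresh_injective (x : Fin (m + 1) → G) : (refresh x).Injective := fun _ _ h =>
  funext fun j => sub_right_injective (congrFun h j.succ)

theorem exists_refresh_eq_iff (x y : Fin (m + 1) → G) :
    (∃ r, refresh x r = y) ↔ ∑ i, y i = ∑ i, x i := by
  refine ⟨fun ⟨r, hr⟩ => hr ▸ sum_refresh x r, fun hy => ⟨fun j => x j.succ - y j.succ, ?_⟩⟩
  rw [Fin.sum_univ_succ, Fin.sum_univ_succ x] at hy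
  refine Fin.cases ?_ (fun j => ?_) |> funext
  · simp only [refresh, Fin.cons_zero, sum_sub_distrib]
    rw [← add_sub_assoc]
    exact (eq_sub_of_add_eq hy).symm
  · simp [refresh]

end Refresh

/-- **Output distribution of the `Refresh` gadget.**
For fixed input shares `x : Fin n → G` and independent uniform randomness
`r : Fin (n-1) → G` (modelling `r_2, …, r_n`), the output shares
`y 0 = x 0 + (r 0 + ⋯ + r (n-2))`, `y i = x i - r (i-1)` for `i ≥ 1`,
are uniformly distributed on the coset `{y : ∑ i, y i = ∑ i, x i}`. -/
theorem stmt_11 (G : Type) [AddCommGroup G] [Fintype G] [DecidableEq G]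
    (n : ℕ) (x : Fin n → G) :
    PMF.map
      (fun r : Fin (n - 1) → G => fun i : Fin n =>
        if h : (i : ℕ) = 0 then x i + ∑ j, r j
        else x i - r ⟨(i : ℕ) - 1, by have := i.isLt; omega⟩)
      (PMF.uniformOfFintype (Fin (n - 1) → G))
    = PMF.uniformOfFinset
        (Finset.univ.filter (fun y : Fin n → G => ∑ i, y i = ∑ i, x i))
        ⟨x, by simp⟩ := by
  cases n with
  | zero =>
    exact PMF.map_uniformOfFintype_of_injective (fun _ _ _ => funext fun j => Fin.elim0 j) _
      fun y => by simp [Subsingleton.elim _ y]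
  | succ m =>
    -- `Fin (m + 1 - 1)` is definitionally `Fin m`, so the gadget's map can be compared with `refresh x`.
    have hmap : (fun (r : Fin m → G) (i : Fin (m + 1)) =>
        if h : (i : ℕ) = 0 then x i + ∑ j, r j
        else x i - r ⟨(i : ℕ) - 1, by have := i.isLt; omega⟩) = refresh x := by
      funext r i
      refine Fin.cases ?_ (fun j => ?_) i <;> simp [refresh]
    refine (congrArg (PMF.map · _) hmap).trans ?_
    exact PMF.map_uniformOfFintype_of_injective (refresh_injective x) _
      fun y => by simp [exists_refresh_eq_iff]
end

section
/- Let G be a finite (additive) abelian group, n ≥ 1, and fix x = (x_1, …, x_n) ∈ G^n. Let (r_{ij})_{1 ≤ i < j ≤ n} be independent, uniformly distributed random elements of G, and define the output shares y_i := x_i + ∑_{j > i} r_{ij} − ∑_{j < i} r_{ji}. Then the random vector (y_1, …, y_n) is uniformly distributed on the coset {y ∈ G^n : y_1 + ⋯ + y_n = x_1 + ⋯ + x_n}. (Output distribution of the StrongRefresh gadget: it preserves the shared value and its output sharing is uniform among all sharings of that value.) -/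
/-!
The output is `x + mask r`, where `mask` is the additive homomorphism sending the randomness `r`
to the offsets `∑ p, (single p.1 (r p) - single p.2 (r p))`. Every offset sums to zero, and
conversely every sum-zero vector `z` is an offset: route each `z i` through the pair
`(i, last)`. The pushforward of the uniform distribution under an affine map with homomorphic
linear part is uniform on its image, since all fibres are cosets of the kernel and hence have
equal size.
-/

open Finset
open scoped ENNReal

namespace PMF

variable {α β : Type*} [Fintype α] [Nonempty α] [DecidableEq β]

theorem map_uniformOfFintype_of_card_fiber_eq (f : α → β) (s : Finset β) (hs : s.Nonempty)
    (hmem : ∀ b, b ∈ s ↔ ∃ a, f a = b)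
    (hfiber : ∀ a a', #{a'' | f a'' = f a} = #{a'' | f a'' = f a'}) :
    map f (uniformOfFintype α) = uniformOfFinset s hs := by
  ext b
  simp only [map_apply, tsum_fintype, uniformOfFintype_apply, uniformOfFinset_apply,
    eq_comm (a := b)]
  rw [← sum_filter, sum_const, nsmul_eq_mul]
  split_ifs with hb
  · obtain ⟨a, rfl⟩ := (hmem b).1 hb
    have hcard : Fintype.card α = #s * #{a' | f a' = f a} := by
      rw [← card_univ, card_eq_sum_card_fiberwise fun a' _ => (hmem _).2 ⟨a', rfl⟩,
        sum_congr rfl fun b hb => ?_, sum_const, smul_eq_mul]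
      obtain ⟨a', rfl⟩ := (hmem b).1 hb
      exact hfiber a' a
    have hpos : (#{a' | f a' = f a} : ℝ≥0∞) ≠ 0 := by simp
    rw [hcard, Nat.cast_mul, mul_comm (#s : ℝ≥0∞),
      ENNReal.mul_inv (.inl hpos) (.inl (ENNReal.natCast_ne_top _)), ← mul_assoc,
      ENNReal.mul_inv_cancel hpos (ENNReal.natCast_ne_top _), one_mul]
  · rw [filter_false_of_mem fun a _ h => hb ((hmem b).2 ⟨a, h⟩)]
    simp

end PMF

theorem AddMonoidHom.card_fiber_add_eq {A B : Type*} [AddCommGroup A] [Fintype A]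
    [AddCommGroup B] [DecidableEq B] (φ : A →+ B) (x : B) (a a' : A) :
    #{a'' | x + φ a'' = x + φ a} = #{a'' | x + φ a'' = x + φ a'} :=
  card_equiv (Equiv.addRight (a' - a)) fun a'' => by
    simp only [mem_filter, mem_univ, true_and, Equiv.coe_addRight, map_add, map_sub,
      add_right_inj]
    rw [add_sub_left_comm, add_eq_left, sub_eq_zero]

namespace StrongRefresh

variable {G : Type*} [AddCommGroup G] {n : ℕ}

abbrev Pairs (n : ℕ) := {p : Fin n × Fin n // p.1 < p.2}

def mask : (Pairs n → G) →+ (Fin n → G) :=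
  ∑ p : Pairs n, AddMonoidHom.comp
    (AddMonoidHom.single (fun _ => G) p.1.1 - AddMonoidHom.single (fun _ => G) p.1.2)
    (Pi.evalAddMonoidHom _ p)

theorem mask_apply (r : Pairs n → G) :
    mask r = ∑ p : Pairs n, (Pi.single p.1.1 (r p) - Pi.single p.1.2 (r p)) := by
  simp [mask]

theorem mask_single (q : Pairs n) (g : G) :
    mask (Pi.single q g) = Pi.single q.1.1 g - Pi.single q.1.2 g := by
  rw [mask_apply, Fintype.sum_eq_single q fun p hp => by simp [hp]]
  simp

theorem sum_mask_apply (r : Pairs n → G) : ∑ i, mask r i = 0 := by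
  simp [mask_apply, Finset.sum_apply, Finset.sum_comm (γ := Fin n)]

theorem exists_mask_eq {z : Fin n → G} (hz : ∑ i, z i = 0) : ∃ r, mask r = z := by
  cases n with
  | zero => exact ⟨0, Subsingleton.elim _ _⟩
  | succ k =>
    let w (i : Fin (k + 1)) : Pairs (k + 1) → G :=
      if h : i < Fin.last k then Pi.single ⟨(i, Fin.last k), h⟩ (z i) else 0
    have hw : ∀ i, mask (w i) = Pi.single i (z i) - Pi.single (Fin.last k) (z i) := fun i => by
      by_cases h : i < Fin.last k
      · simpa [w, h] using mask_single _ _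
      · rw [Fin.lt_last_iff_ne_last, not_not] at h
        simp [w, h]
    refine ⟨∑ i, w i, ?_⟩
    rw [map_sum, Fintype.sum_congr _ _ hw, sum_sub_distrib, univ_sum_single, sub_eq_self,
      ← Pi.single_zero (Fin.last k), ← hz]
    exact (map_sum (AddMonoidHom.single (fun _ => G) (Fin.last k)) z univ).symm

theorem exists_add_mask_eq_iff (x y : Fin n → G) :
    (∃ r, x + mask r = y) ↔ ∑ i, y i = ∑ i, x i := by
  constructor
  · rintro ⟨r, rfl⟩
    simp [sum_add_distrib, sum_mask_apply]
  · intro hy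
    obtain ⟨r, hr⟩ := exists_mask_eq (z := y - x) (by simp [sum_sub_distrib, hy])
    exact ⟨r, by simp [hr]⟩

end StrongRefresh

open StrongRefresh in
/-- **Output distribution of the `StrongRefresh` gadget.**
For fixed input shares `x : Fin n → G` and independent uniform randomness
`r` indexed by the pairs `i < j`, the output shares
`y i = x i + ∑_{j > i} r (i,j) − ∑_{j < i} r (j,i)`
are uniformly distributed on the coset `{y : ∑ i, y i = ∑ i, x i}`. -/
theorem stmt_12 (G : Type) [AddCommGroup G] [Fintype G] [DecidableEq G]
    (n : ℕ) (x : Fin n → G) :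
    PMF.map
      (fun r : {p : Fin n × Fin n // p.1 < p.2} → G => fun i : Fin n =>
        x i + (∑ p : {p : Fin n × Fin n // p.1 < p.2}, if p.1.1 = i then r p else 0)
            - (∑ p : {p : Fin n × Fin n // p.1 < p.2}, if p.1.2 = i then r p else 0))
      (PMF.uniformOfFintype ({p : Fin n × Fin n // p.1 < p.2} → G))
    = PMF.uniformOfFinset
        (Finset.univ.filter (fun y : Fin n → G => ∑ i, y i = ∑ i, x i))
        ⟨x, by simp⟩ := by
  have hshares : (fun r : Pairs n → G => fun i : Fin n =>
        x i + (∑ p : Pairs n, if p.1.1 = i then r p else 0)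
            - (∑ p : Pairs n, if p.1.2 = i then r p else 0)) = fun r => x + mask r := by
    funext r i
    simp [mask_apply, Finset.sum_apply, Pi.single_apply, eq_comm, add_sub_assoc]
  rw [hshares]
  refine PMF.map_uniformOfFintype_of_card_fiber_eq _ _ _ (fun y => ?_)
    ((mask (G := G) (n := n)).card_fiber_add_eq x)
  simp [exists_add_mask_eq_iff]
end

section
/- Let R be a commutative ring of characteristic 2, n ≥ 1, and let x, c, y : Fin n → R be share vectors. Let r : (i j : Fin n) → R be arbitrary randomness and let t_i := x_i·c_i + (∑_{j < i} (r j i + x_i·c_j + x_j·c_i)) + (∑_{j > i} r i j) be the ISW multiplication output shares of (x_i) and (c_i). Define z_i := y_i + t_i. Then ∑_i z_i = (∑_i y_i) + (∑_i x_i)·(∑_i c_i). (Functional correctness of the SecMultSub gadget: for every choice of randomness, its output is a sharing of y − x·c, where in characteristic 2 subtraction coincides with addition.) -/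
private lemma swap_sum {R : Type*} [AddCommMonoid R] {n : ℕ} (g : Fin n → Fin n → R) :
    ∑ i, ∑ j ∈ Finset.univ.filter (fun j => j < i), g i j
      = ∑ i, ∑ j ∈ Finset.univ.filter (fun j => i < j), g j i := by
  simp only [Finset.sum_filter]
  exact Finset.sum_comm

private lemma split_sum {R : Type*} [AddCommMonoid R] {n : ℕ} (i : Fin n) (f : Fin n → R) :
    ∑ j, f j = f i + (∑ j ∈ Finset.univ.filter (fun j => j < i), f j)
      + (∑ j ∈ Finset.univ.filter (fun j => i < j), f j) := by
  have h1 : Finset.univ.filter (fun j => ¬ j < i)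
      = insert i (Finset.univ.filter (fun j => i < j)) := by
    ext j
    simp [not_lt, le_iff_lt_or_eq, or_comm, eq_comm]
  rw [← Finset.sum_filter_add_sum_filter_not Finset.univ (fun j => j < i) f, h1,
    Finset.sum_insert (by simp)]
  abel

/-- **Functional correctness of the `SecMultSub` gadget.**
In a commutative ring of characteristic 2, let `t` be the ISW multiplication output
shares of the sharings `x` and `c` (with arbitrary randomness `r`), and let
`z i = y i + t i`.  Then `z` is a sharing of `(∑ y) + (∑ x)·(∑ c)`, i.e. of
`y − x·c` (subtraction coincides with addition in characteristic 2). -/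
theorem stmt_14 (R : Type*) [CommRing R] [CharP R 2] (n : ℕ) (hn : 1 ≤ n)
    (x c y : Fin n → R) (r : Fin n → Fin n → R)
    (t : Fin n → R)
    (ht : ∀ i, t i = x i * c i
        + (∑ j ∈ Finset.univ.filter (fun j => j < i), (r j i + x i * c j + x j * c i))
        + (∑ j ∈ Finset.univ.filter (fun j => i < j), r i j))
    (z : Fin n → R) (hz : ∀ i, z i = y i + t i) :
    ∑ i, z i = (∑ i, y i) + (∑ i, x i) * (∑ i, c i) := by
  have key : ∑ i, t i = (∑ i, x i) * (∑ i, c i) := by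
    simp only [ht, Finset.sum_add_distrib]
    have hr : (∑ i, ∑ j ∈ Finset.univ.filter (fun j => j < i), r j i)
        = ∑ i, ∑ j ∈ Finset.univ.filter (fun j => i < j), r i j :=
      swap_sum (fun i j => r j i)
    have hc : (∑ i, ∑ j ∈ Finset.univ.filter (fun j => j < i), x j * c i)
        = ∑ i, ∑ j ∈ Finset.univ.filter (fun j => i < j), x i * c j :=
      swap_sum (fun i j => x j * c i)
    rw [hr, hc, Finset.sum_mul_sum,
      Finset.sum_congr rfl (fun i _ => split_sum i (fun j => x i * c j)),
      Finset.sum_add_distrib, Finset.sum_add_distrib]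
    abel_nf
    rw [CharTwo.two_zsmul]
    abel
  simp only [hz, Finset.sum_add_distrib, key]
end

section
/- Let F be a field of characteristic 2, m ≥ 1, and let A ∈ F^{m×m} be upper unitriangular (A[j,j] = 1 for all j and A[k,j] = 0 for k > j) and b ∈ F^m. Let n ≥ 1 and let A^{(1)}, …, A^{(n)} and b^{(1)}, …, b^{(n)} be additive sharings, i.e. ∑_i A^{(i)} = A and ∑_i b^{(i)} = b. Run the masked back substitution: for j = m down to 2, set x_j := ∑_{i=1}^n b^{(i)}_j (unmasking the j-th entry), then for every k < j and every share index i update b^{(i)}_k := b^{(i)}_k + x_j · A^{(i)}[k,j]; finally set x_1 := ∑_{i=1}^n b^{(i)}_1. Then the resulting public vector x = (x_1, …, x_m) satisfies A·x = b, and hence equals the unique solution of the system. (Functional correctness of the SecBackSub gadget with public output.) -/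
/-!
Summing the shares commutes with every step of the masked loop, because unmasking and the share
updates are additive. Hence the public values are those of ordinary back substitution on `(A, b)`,
run from the last column down: when column `j` is processed its entry is final, and it is then
eliminated from the rows above. This gives `x k = b k + ∑_{l > k} A k l * x l`, which in
characteristic 2 is `b k - ∑_{l > k} A k l * x l`, i.e. `A x = b` for unitriangular `A`.
-/

def sbFold {F : Type*} [Field F] {n m : ℕ}
    (AS : Fin n → Matrix (Fin m) (Fin m) F)
    (bS : Fin n → Fin m → F) :
    (Fin n → Fin m → F) × (Fin m → F) :=
  ((((List.finRange m).filter (fun (j : Fin m) => 0 < (j : ℕ))).reverse).foldl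
    (fun st j =>
      let xj := ∑ i, st.1 i j
      (fun i k => if k < j then st.1 i k + xj * AS i k j else st.1 i k,
       Function.update st.2 j xj))
    (bS, fun _ => 0))

open Finset Matrix

namespace BackSubstitution

variable {ι R : Type*} [LinearOrder ι] [Semiring R] (A : Matrix ι ι R)

def step (st : (ι → R) × (ι → R)) (j : ι) : (ι → R) × (ι → R) :=
  (fun k => if k < j then st.1 k + A k j * st.1 j else st.1 k, Function.update st.2 j (st.1 j))

theorem foldl_step_snd_of_notMem {L : List ι} {l : ι} (hl : l ∉ L) (st : (ι → R) × (ι → R)) :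
    (L.foldl (step A) st).2 l = st.2 l := by
  induction L generalizing st with
  | nil => rfl
  | cons j L ih =>
    rw [List.mem_cons, not_or] at hl
    rw [List.foldl_cons, ih hl.2]
    exact Function.update_of_ne hl.1 _ _

theorem foldl_step_fst_of_forall_not_lt {L : List ι} {k : ι} (hk : ∀ l ∈ L, ¬k < l)
    (st : (ι → R) × (ι → R)) : (L.foldl (step A) st).1 k = st.1 k := by
  induction L generalizing st with
  | nil => rfl
  | cons j L ih =>
    rw [List.foldl_cons, ih fun l hl => hk l (List.mem_cons_of_mem j hl)]
    exact if_neg (hk j List.mem_cons_self)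

-- After `l` is processed only smaller indices are processed, and they never touch coordinate `l`.
theorem foldl_step_snd_of_mem {L : List ι} (hL : L.Pairwise (· > ·)) {l : ι} (hl : l ∈ L)
    (st : (ι → R) × (ι → R)) : (L.foldl (step A) st).2 l = (L.foldl (step A) st).1 l := by
  induction L generalizing st with
  | nil => simp at hl
  | cons j L ih =>
    rw [List.pairwise_cons] at hL
    by_cases hlL : l ∈ L
    · exact ih hL.2 hlL _
    obtain rfl : l = j := by simpa [hlL] using hl
    rw [List.foldl_cons, foldl_step_snd_of_notMem A hlL,
      foldl_step_fst_of_forall_not_lt A fun l' hl' => asymm (hL.1 l' hl')]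
    simp [step]

theorem foldl_step_fst {L : List ι} (hL : L.Pairwise (· > ·))
    (st : (ι → R) × (ι → R)) (k : ι) :
    (L.foldl (step A) st).1 k =
      st.1 k + ∑ l ∈ L.toFinset with k < l, A k l * (L.foldl (step A) st).2 l := by
  induction L generalizing st with
  | nil => simp
  | cons j L ih =>
    rw [List.pairwise_cons] at hL
    have hjL : j ∉ L := fun h => lt_irrefl j (hL.1 j h)
    rw [List.foldl_cons, ih hL.2, List.toFinset_cons, filter_insert]
    by_cases hkj : k < j
    · rw [if_pos hkj, sum_insert (by simp [hjL]), foldl_step_snd_of_notMem A hjL]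
      simp [step, hkj, add_assoc]
    · rw [if_neg hkj]
      simp [step, hkj]

end BackSubstitution

theorem Matrix.mulVec_eq_of_eq_sub_sum_of_unitriangular {ι R : Type*} [Fintype ι] [LinearOrder ι]
    [Ring R] {A : Matrix ι ι R} (hdiag : ∀ j, A j j = 1) (hupper : A.IsUpperTriangular)
    {b y : ι → R} (hy : ∀ k, y k = b k - ∑ l with k < l, A k l * y l) : A *ᵥ y = b := by
  funext k
  have hdiagonal : ∑ l with ¬k < l, A k l * y l = y k := by
    rw [sum_eq_single_of_mem k (by simp)]
    · rw [hdiag, one_mul]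
    · intro l hl hlk
      rw [hupper (lt_of_le_of_ne (not_lt.mp (mem_filter.mp hl).2) hlk), zero_mul]
  rw [mulVec, dotProduct, ← sum_filter_not_add_sum_filter _ (k < ·), hdiagonal, hy k,
    sub_add_cancel]

theorem Matrix.mulVec_injective_of_unitriangular {ι K : Type*} [Fintype ι] [LinearOrder ι]
    [Field K] {A : Matrix ι ι K} (hdiag : ∀ j, A j j = 1) (hupper : A.IsUpperTriangular) :
    Function.Injective A.mulVec := by
  refine mulVec_injective_iff_isUnit.mpr ((isUnit_iff_isUnit_det A).mpr ?_)
  simp [det_of_isUpperTriangular hupper, hdiag]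

section SbOrder

variable {m : ℕ}

def sbOrder (m : ℕ) : List (Fin m) :=
  ((List.finRange m).filter fun (j : Fin m) => 0 < (j : ℕ)).reverse

theorem sbOrder_pairwise (m : ℕ) : (sbOrder m).Pairwise (· > ·) :=
  List.pairwise_reverse.mpr ((List.pairwise_lt_finRange m).filter _)

theorem mem_sbOrder {j : Fin m} : j ∈ sbOrder m ↔ 0 < (j : ℕ) := by
  simp [sbOrder]

theorem filter_lt_toFinset_sbOrder (k : Fin m) :
    (sbOrder m).toFinset.filter (k < ·) = univ.filter (k < ·) := by
  ext l
  simp only [mem_filter, List.mem_toFinset, mem_sbOrder, mem_univ, true_and, and_iff_right_iff_imp]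
  exact fun hkl => lt_of_le_of_lt (Nat.zero_le k) hkl

variable {R : Type*} [Semiring R] (A : Matrix (Fin m) (Fin m) R)

theorem foldl_step_sbOrder_snd (st : (Fin m → R) × (Fin m → R)) {j : Fin m} (hj : 0 < (j : ℕ)) :
    ((sbOrder m).foldl (BackSubstitution.step A) st).2 j =
      ((sbOrder m).foldl (BackSubstitution.step A) st).1 j :=
  BackSubstitution.foldl_step_snd_of_mem A (sbOrder_pairwise m) (mem_sbOrder.mpr hj) st

theorem foldl_step_sbOrder_fst (st : (Fin m → R) × (Fin m → R)) (k : Fin m) :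
    ((sbOrder m).foldl (BackSubstitution.step A) st).1 k =
      st.1 k + ∑ l with k < l, A k l * ((sbOrder m).foldl (BackSubstitution.step A) st).1 l := by
  rw [BackSubstitution.foldl_step_fst A (sbOrder_pairwise m), filter_lt_toFinset_sbOrder]
  refine congr_arg _ (sum_congr rfl fun l hl => ?_)
  rw [foldl_step_sbOrder_snd A st (lt_of_le_of_lt (Nat.zero_le k) (mem_filter.mp hl).2)]

end SbOrder

section SbFold

variable {F : Type*} [Field F] {n m : ℕ}

theorem sbFold_sum_shares {A : Matrix (Fin m) (Fin m) F} {AS : Fin n → Matrix (Fin m) (Fin m) F}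
    (hA : ∑ i, AS i = A) (bS : Fin n → Fin m → F) :
    (∑ i, (sbFold AS bS).1 i, (sbFold AS bS).2) =
      (sbOrder m).foldl (BackSubstitution.step A) (∑ i, bS i, fun _ => 0) := by
  refine (List.foldl_hom (fun st : (Fin n → Fin m → F) × (Fin m → F) => (∑ i, st.1 i, st.2))
    fun st j => ?_).symm
  refine Prod.ext (funext fun k => ?_) (by simp [BackSubstitution.step, Finset.sum_apply])
  by_cases hkj : k < j
  · simp [BackSubstitution.step, hkj, sum_add_distrib, ← hA, Matrix.sum_apply, sum_mul, mul_comm]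
  · simp [BackSubstitution.step, hkj]

theorem update_sbFold_eq_foldl_step {A : Matrix (Fin m) (Fin m) F}
    {AS : Fin n → Matrix (Fin m) (Fin m) F} (hA : ∑ i, AS i = A) (bS : Fin n → Fin m → F)
    (hm : 1 ≤ m) :
    Function.update (sbFold AS bS).2 ⟨0, hm⟩ (∑ i, (sbFold AS bS).1 i ⟨0, hm⟩) =
      ((sbOrder m).foldl (BackSubstitution.step A) (∑ i, bS i, fun _ => 0)).1 := by
  funext j
  rcases Nat.eq_zero_or_pos (j : ℕ) with hj | hj
  · obtain rfl : j = ⟨0, hm⟩ := Fin.ext hj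
    simp [← sbFold_sum_shares hA, Finset.sum_apply]
  · rw [Function.update_of_ne (Fin.ne_of_val_ne hj.ne'), ← foldl_step_sbOrder_snd A _ hj,
      ← sbFold_sum_shares hA]

end SbFold

theorem stmt_15_general (F : Type*) [Field F] [CharP F 2] (m : ℕ) (hm : 1 ≤ m)
    (A : Matrix (Fin m) (Fin m) F)
    (hdiag : ∀ j, A j j = 1) (hlow : ∀ k j : Fin m, j < k → A k j = 0)
    (b : Fin m → F) (n : ℕ)
    (AS : Fin n → Matrix (Fin m) (Fin m) F) (bS : Fin n → Fin m → F)
    (hA : ∑ i, AS i = A) (hb : ∑ i, bS i = b)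
    (x : Fin m → F)
    (hx : x = Function.update (sbFold AS bS).2 ⟨0, hm⟩
        (∑ i, (sbFold AS bS).1 i ⟨0, hm⟩)) :
    A.mulVec x = b ∧ ∀ y : Fin m → F, A.mulVec y = b → y = x := by
  rw [update_sbFold_eq_foldl_step hA bS hm, hb] at hx
  have hsolve : A *ᵥ x = b := by
    refine mulVec_eq_of_eq_sub_sum_of_unitriangular hdiag hlow fun k => ?_
    rw [hx, CharTwo.sub_eq_add]
    exact foldl_step_sbOrder_fst A _ k
  exact ⟨hsolve, fun y hy => mulVec_injective_of_unitriangular hdiag hlow (hy.trans hsolve.symm)⟩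

/-- **Functional correctness of the `SecBackSub` gadget with public output.**
Over a field of characteristic 2, let `A` be upper unitriangular and let `AS`, `bS`
be `n`-share additive sharings of `A` and `b`.  Running the masked back substitution
(`sbFold`) and finally unmasking the first coordinate `x 0 := ∑ i` of the resulting
shares yields a public vector `x` with `A.mulVec x = b`; hence `x` is the unique
solution of the system. -/
theorem stmt_15 (F : Type*) [Field F] [CharP F 2] (m : ℕ) (hm : 1 ≤ m)
    (A : Matrix (Fin m) (Fin m) F)
    (hdiag : ∀ j, A j j = 1) (hlow : ∀ k j : Fin m, j < k → A k j = 0)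
    (b : Fin m → F) (n : ℕ) (hn : 1 ≤ n)
    (AS : Fin n → Matrix (Fin m) (Fin m) F) (bS : Fin n → Fin m → F)
    (hA : ∑ i, AS i = A) (hb : ∑ i, bS i = b)
    (x : Fin m → F)
    (hx : x = Function.update (sbFold AS bS).2 ⟨0, hm⟩
        (∑ i, (sbFold AS bS).1 i ⟨0, hm⟩)) :
    A.mulVec x = b ∧ ∀ y : Fin m → F, A.mulVec y = b → y = x :=
  stmt_15_general F m hm A hdiag hlow b n AS bS hA hb x hx
end
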